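/- Assume e ∈ dcl(Σ) and fix a Lascar tuple b with e ∈ dcl(b). Let H = π_b^{-1}[Gal^c_L(Σ, e)] ≤ Aut_e(Σ), where Gal^c_L(Σ, e) is the closure of the trivial subgroup of Gal_L(Σ, e). Then for tuples c and d of realizations of Σ, c ≡^H d if and only if c ≡^KP_e d. -/

import Mathlib

/- Framework: relativized Lascar groups of a first-order theory over a
hyperimaginary, following "Relativized Galois groups of first order theories
over a hyperimaginary" by H. Lee and J. Lee. -/

open FirstOrder Cardinal Pointwise

universe u

namespace RelLascar

variable {L : FirstOrder.Language.{u, u}} {M : Type u} [L.Structure M]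

/-- The group of automorphisms of the monster model `M`. -/
instance : Group (M ≃[L] M) where
  mul f g := f.comp g
  one := FirstOrder.Language.Equiv.refl L M
  inv f := f.symm
  mul_assoc f g h := (FirstOrder.Language.Equiv.comp_assoc h g f).symm
  one_mul := FirstOrder.Language.Equiv.refl_comp
  mul_one := FirstOrder.Language.Equiv.comp_refl
  inv_mul_cancel := FirstOrder.Language.Equiv.symm_comp_self

/-- Automorphisms act on the monster model. -/
instance : MulAction (M ≃[L] M) M where
  smul f x := f x
  one_smul _ := rfl
  mul_smul _ _ _ := rfl

@[simp] theorem autSmul_def (f : M ≃[L] M) (x : M) : f • x = f x := rfl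

/-- The solution set in `M` of a set of formulas in variables `ι` with
parameters `prm : π → M`. -/
def SolSet {ι π : Type u} (p : Set (L.Formula (ι ⊕ π))) (prm : π → M) : Set (ι → M) :=
  {v | ∀ φ ∈ p, φ.Realize (Sum.elim v prm)}

/-- A set of `ι`-tuples is type-definable over the parameters `prm`. -/
def TypeDefinableOver {ι π : Type u} (prm : π → M) (X : Set (ι → M)) : Prop :=
  ∃ p : Set (L.Formula (ι ⊕ π)), X = SolSet p prm

/-- Two tuples have the same (complete) type over `∅`. -/
def SameTp {ι : Type u} (c d : ι → M) : Prop :=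
  ∀ φ : L.Formula ι, φ.Realize c ↔ φ.Realize d

/-- `M` is a monster model with degree of saturation and strong homogeneity `κ`:
`κ` is uncountable, tuples of size `< κ` with the same type are conjugate under an
automorphism, and every partial type in `< κ` variables over `< κ` parameters that
is finitely realized in `M` is realized in `M`.  ("Small" means of size `< κ`.) -/
def IsMonster (κ : Cardinal.{u}) (L : FirstOrder.Language.{u, u}) (M : Type u) [L.Structure M] : Prop :=
  ℵ₀ < κ ∧
  (∀ (ι : Type u) (c d : ι → M), #ι < κ → SameTp (L := L) (M := M) c d →
      ∃ f : M ≃[L] M, ∀ i, f (c i) = d i) ∧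
  (∀ (ι π : Type u) (prm : π → M) (p : Set (L.Formula (ι ⊕ π))), #ι < κ → #π < κ →
      (∀ q : Finset (L.Formula (ι ⊕ π)), ↑q ⊆ p →
        ∃ v : ι → M, ∀ φ ∈ (q : Set (L.Formula (ι ⊕ π))), φ.Realize (Sum.elim v prm)) →
      ∃ v : ι → M, v ∈ SolSet p prm)

variable (κ : Cardinal.{u})

section Hyperimaginary

/- The hyperimaginary `e = a_E`, where `E` is the `∅`-type-definable equivalence
relation defined by the set of formulas `pE` and `a : γ → M`. -/
variable {γ : Type u} (pE : Set (L.Formula (γ ⊕ γ))) (a : γ → M)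

/-- The relation defined by a set of formulas in variables `δ ⊕ δ` (with no
parameters); for `pE` this is the equivalence relation `E`. -/
def Frel {δ : Type u} (pF : Set (L.Formula (δ ⊕ δ))) (x y : δ → M) : Prop :=
  ∀ φ ∈ pF, φ.Realize (Sum.elim x y)

/-- The class of a tuple `x` under the relation defined by `pF`; for an
equivalence relation this is the hyperimaginary `x_F` (as a set of representatives). -/
def Fclass {δ : Type u} (pF : Set (L.Formula (δ ⊕ δ))) (x : δ → M) : Set (δ → M) :=
  {y | Frel pF x y}

/-- `Aut_e(𝔠)`: the subgroup of automorphisms fixing the hyperimaginary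
`e = a_E` setwise. -/
def AutE : Subgroup (M ≃[L] M) := MulAction.stabilizer (M ≃[L] M) (Fclass pE a)

/-- `Aut_e(𝔠)` as a group. -/
abbrev Ge := ↥(AutE pE a)

/-- The hyperimaginary `e` is definable over the tuple `t` (i.e. `e ∈ dcl(t)`):
every automorphism fixing `t` pointwise fixes `e`. -/
def eInDclTuple {ι : Type u} (t : ι → M) : Prop :=
  ∀ f : M ≃[L] M, (∀ i, f (t i) = t i) → f ∈ AutE pE a

/-- The set of elements of `Aut_e(𝔠)` fixing pointwise some small elementary
substructure (model) `N` with `e ∈ dcl(N)`. -/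
def modelFixers : Set (Ge pE a) :=
  {f | ∃ N : L.ElementarySubstructure M, #N < κ ∧
        (∀ g : M ≃[L] M, (∀ x ∈ N, g x = x) → g ∈ AutE pE a) ∧
        ∀ x ∈ N, (f : M ≃[L] M) x = x}

/-- `Autf_L(𝔠, e)`: the normal subgroup of `Aut_e(𝔠)` generated by the
pointwise stabilizers of small models `N` with `e ∈ dcl(N)`. -/
def AutfL : Subgroup (Ge pE a) := Subgroup.normalClosure (modelFixers κ pE a)

/-- `c ≡ᴸ_e d` : the tuples have the same Lascar strong type over `e`. -/
def LEq {ι : Type u} (c d : ι → M) : Prop := ∃ f ∈ AutfL κ pE a, f • c = d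

theorem LEq.refl {ι : Type u} (c : ι → M) : LEq κ pE a c c :=
  ⟨1, one_mem _, one_smul _ _⟩

theorem LEq.symm {ι : Type u} {c d : ι → M} (h : LEq κ pE a c d) : LEq κ pE a d c := by
  obtain ⟨f, hf, rfl⟩ := h
  exact ⟨f⁻¹, inv_mem hf, inv_smul_smul f c⟩

theorem LEq.trans {ι : Type u} {c d e : ι → M} (h1 : LEq κ pE a c d)
    (h2 : LEq κ pE a d e) : LEq κ pE a c e := by
  obtain ⟨f, hf, rfl⟩ := h1
  obtain ⟨g, hg, rfl⟩ := h2
  exact ⟨g * f, mul_mem hg hf, (mul_smul g f c).symm ▸ rfl⟩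

end Hyperimaginary

section Sigma

variable {γ : Type u} (pE : Set (L.Formula (γ ⊕ γ))) (a : γ → M)
variable {V β : Type u} {pS : Set (L.Formula (V ⊕ β))} {bp : β → M}

/-- The solution set `Σ(𝔠)` of the partial type `Σ` (given by formulas `pS` over
the parameters `bp`). -/
abbrev Sol (pS : Set (L.Formula (V ⊕ β))) (bp : β → M) : Set (V → M) := SolSet pS bp

/-- The type of realizations of `Σ`. -/
abbrev SolT (pS : Set (L.Formula (V ⊕ β))) (bp : β → M) := ↥(Sol pS bp)

variable (pS bp) in
/-- The partial type `Σ` is `e`-invariant. -/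
def SolInv : Prop := ∀ (g : Ge pE a) (v : V → M), v ∈ Sol pS bp → g • v ∈ Sol pS bp

/-- The restriction homomorphism `Aut_e(𝔠) → Perm(Σ(𝔠))`, `f ↦ f ↾ Σ(𝔠)`. -/
def resPerm (hInv : SolInv pE a pS bp) : Ge pE a →* Equiv.Perm (SolT pS bp) where
  toFun g :=
    { toFun := fun v => ⟨g • (v : V → M), hInv g v v.2⟩
      invFun := fun v => ⟨g⁻¹ • (v : V → M), hInv g⁻¹ v v.2⟩
      left_inv := fun v => Subtype.ext (inv_smul_smul g (v : V → M))
      right_inv := fun v => Subtype.ext (smul_inv_smul g (v : V → M)) }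
  map_one' := Equiv.ext fun v => Subtype.ext (one_smul (Ge pE a) (v : V → M))
  map_mul' g h := Equiv.ext fun v => Subtype.ext (mul_smul g h (v : V → M))

/-- `Aut_e(Σ) = {f ↾ Σ(𝔠) : f ∈ Aut_e(𝔠)}`, as a subgroup of the permutations of
`Σ(𝔠)`. -/
def AutES (hInv : SolInv pE a pS bp) : Subgroup (Equiv.Perm (SolT pS bp)) :=
  (resPerm pE a hInv).range

/-- `Aut_e(Σ)` as a group. -/
abbrev GS (hInv : SolInv pE a pS bp) := ↥(AutES pE a hInv)

/-- The restriction map `ξ : Aut_e(𝔠) → Aut_e(Σ)`. -/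
def toGS (hInv : SolInv pE a pS bp) : Ge pE a →* GS pE a hInv :=
  (resPerm pE a hInv).rangeRestrict

/-- A tuple of realizations of `Σ`, flattened to a tuple of elements of `M`. -/
def flat {ι : Type u} (c : ι → SolT pS bp) : ι × V → M := fun p => (c p.1 : V → M) p.2

theorem flat_toGS_smul (hInv : SolInv pE a pS bp) {ι : Type u} (g : Ge pE a)
    (c : ι → SolT pS bp) : flat ((toGS pE a hInv g) • c) = g • flat c := rfl

theorem flat_smul_of_res (hInv : SolInv pE a pS bp) {ι : Type u} {τ : GS pE a hInv}
    {g : Ge pE a} (hg : resPerm pE a hInv g = ↑τ) (c : ι → SolT pS bp) :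
    flat (τ • c) = g • flat c := by
  have : τ = toGS pE a hInv g := Subtype.ext hg.symm
  subst this
  rfl

/-- `Autf_L(Σ, e)`: the subgroup of `Aut_e(Σ)` consisting of those restricted
automorphisms `σ` such that every small tuple of realizations of `Σ` has the same
Lascar strong type over `e` as its image under `σ`. -/
def AutfLS (hInv : SolInv pE a pS bp) : Subgroup (GS pE a hInv) where
  carrier := {σ | ∀ (ι : Type u), #ι < κ → ∀ c : ι → SolT pS bp,
      LEq κ pE a (flat c) (flat (σ • c))}
  one_mem' := by
    intro ι _ c
    rw [one_smul]
    exact LEq.refl κ pE a _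
  mul_mem' := by
    intro σ τ hσ hτ ι hι c
    rw [mul_smul]
    exact LEq.trans κ pE a (hτ ι hι c) (hσ ι hι (τ • c))
  inv_mem' := by
    intro σ hσ ι hι c
    have h := hσ ι hι (σ⁻¹ • c)
    rw [smul_inv_smul] at h
    exact LEq.symm κ pE a h

theorem AutfLS_normal (hInv : SolInv pE a pS bp) : (AutfLS κ pE a hInv).Normal := by
  constructor
  intro σ hσ τ ι hι c
  obtain ⟨g, hg⟩ := τ.2
  have hginv : resPerm pE a hInv g⁻¹ = ↑τ⁻¹ := by
    rw [map_inv, hg]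
    rfl
  obtain ⟨f, hf, hfe⟩ := hσ ι hι (τ⁻¹ • c)
  refine ⟨g * f * g⁻¹, (Subgroup.normalClosure_normal).conj_mem f hf g, ?_⟩
  have h1 : flat (τ⁻¹ • c) = g⁻¹ • flat c := flat_smul_of_res pE a hInv hginv c
  have h2 : flat ((τ * σ * τ⁻¹) • c) = g • flat (σ • τ⁻¹ • c) := by
    rw [mul_smul, mul_smul]
    exact flat_smul_of_res pE a hInv hg _
  rw [h2, ← hfe, h1, ← mul_smul, ← mul_smul]

/-- The relativized Lascar group `Gal_L(Σ, e) = Aut_e(Σ) / Autf_L(Σ, e)`. -/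
def GalL (hInv : SolInv pE a pS bp) := GS pE a hInv ⧸ AutfLS κ pE a hInv

/-- The projection `π_b : Aut_e(Σ) → Gal_L(Σ, e)`. -/
def projb (hInv : SolInv pE a pS bp) : GS pE a hInv → GalL κ pE a hInv :=
  QuotientGroup.mk

/-- The projection `π_Σ : Aut_e(𝔠) → Gal_L(Σ, e)`. -/
def projS (hInv : SolInv pE a pS bp) : Ge pE a → GalL κ pE a hInv :=
  fun g => projb κ pE a hInv (toGS pE a hInv g)

/-- A Lascar tuple in `Σ` over `e`: a small tuple `b` of realizations of `Σ` such
that `Autf_L(Σ, e) = {σ ∈ Aut_e(Σ) : b ≡ᴸ_e σ(b)}`. -/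
def IsLascarTuple (hInv : SolInv pE a pS bp) {ιb : Type u} (b : ιb → SolT pS bp) : Prop :=
  #ιb < κ ∧ ∀ σ : GS pE a hInv,
    σ ∈ AutfLS κ pE a hInv ↔ LEq κ pE a (flat b) (flat (σ • b))

variable (pS bp) in
/-- `e ∈ dcl(Σ)`: there is a small tuple of realizations of `Σ` over which `e` is
definable. -/
def eInDclSigma : Prop :=
  ∃ (ι : Type u) (c : ι → SolT pS bp), #ι < κ ∧ eInDclTuple pE a (flat c)

/-- The complete type of the tuple `v` over the parameters `prm` (with both
indexed by `ι`): the set of formulas realized by `v` with parameters `prm`. -/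
def tpOver {ι : Type u} (prm v : ι → M) : Set (L.Formula (ι ⊕ ι)) :=
  {φ | φ.Realize (Sum.elim v prm)}

/-- The type space `S_b(b) = {tp(f(b)/b) : f ∈ Aut_e(𝔠)}` over a tuple `b` of
realizations of `Σ`. -/
def Sb {ιb : Type u} (b : ιb → SolT pS bp) :
    Set (Set (L.Formula ((ιb × V) ⊕ (ιb × V)))) :=
  Set.range fun g : Ge pE a => tpOver (flat b) (g • flat b)

/-- The logic topology on a set of types: the subspace topology induced from the
product topology on `Formula → Bool` via characteristic functions. -/
noncomputable def typeSetTop {F : Type u} (X : Set (Set F)) : TopologicalSpace ↥X :=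
  TopologicalSpace.induced
    (fun p (φ : F) => (p : Set F).boolIndicator φ) inferInstance

/-- The map `ν_b : S_b(b) → Gal_L(Σ, e)`, `tp(σ(b)/b) ↦ [σ]`. -/
noncomputable def nub (hInv : SolInv pE a pS bp) {ιb : Type u} (b : ιb → SolT pS bp) :
    ↥(Sb pE a b) → GalL κ pE a hInv :=
  fun p => projS κ pE a hInv (Set.mem_range.mp p.2).choose

/-- The topology `𝔱_b` on the relativized Lascar group `Gal_L(Σ, e)`: the quotient
topology induced by `ν_b` from the logic topology on `S_b(b)`. -/
noncomputable def galTopb (hInv : SolInv pE a pS bp) {ιb : Type u}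
    (b : ιb → SolT pS bp) : TopologicalSpace (GalL κ pE a hInv) :=
  (typeSetTop (Sb pE a b)).coinduced (nub κ pE a hInv b)

end Sigma

section GalT

variable {γ : Type u} (pE : Set (L.Formula (γ ⊕ γ))) (a : γ → M)

/-- The Lascar group `Gal_L(T, e) = Aut_e(𝔠) / Autf_L(𝔠, e)`. -/
def GalT := Ge pE a ⧸ AutfL κ pE a

/-- The projection `π : Aut_e(𝔠) → Gal_L(T, e)`. -/
def projT : Ge pE a → GalT κ pE a := QuotientGroup.mk

/-- The type space `S_N(N) = {tp(f(N)/N) : f ∈ Aut_e(𝔠)}` over a small model `N`. -/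
def SMod (N : L.ElementarySubstructure M) : Set (Set (L.Formula (↥N ⊕ ↥N))) :=
  Set.range fun g : Ge pE a =>
    tpOver (Subtype.val : ↥N → M) (g • (Subtype.val : ↥N → M))

/-- The map `ν : S_N(N) → Gal_L(T, e)`, `tp(f(N)/N) ↦ [f]`. -/
noncomputable def nuT (N : L.ElementarySubstructure M) :
    ↥(SMod pE a N) → GalT κ pE a :=
  fun p => projT κ pE a (Set.mem_range.mp p.2).choose

/-- The standard quotient topology on the Lascar group `Gal_L(T, e)` induced via
the type space over a small model `N` (with `e ∈ dcl(N)`). -/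
noncomputable def galTopT (N : L.ElementarySubstructure M) :
    TopologicalSpace (GalT κ pE a) :=
  (typeSetTop (SMod pE a N)).coinduced (nuT κ pE a N)

/-- `Autf_KP(𝔠, e)`: the preimage under `π` of the closure of the identity in
`Gal_L(T, e)`. -/
noncomputable def AutfKPset (N : L.ElementarySubstructure M) : Set (Ge pE a) :=
  projT κ pE a ⁻¹' (@closure _ (galTopT κ pE a N) {projT κ pE a 1})

/-- `Autf_S(𝔠, e)`: the preimage under `π` of the connected component of the
identity in `Gal_L(T, e)`. -/
noncomputable def AutfSset (N : L.ElementarySubstructure M) : Set (Ge pE a) :=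
  projT κ pE a ⁻¹' (@connectedComponent _ (galTopT κ pE a N) (projT κ pE a 1))

/-- `c ≡ᴷᴾ_e d` : the tuples have the same KP strong type over `e`. -/
def KPeq (N : L.ElementarySubstructure M) {ι : Type u} (c d : ι → M) : Prop :=
  ∃ f ∈ AutfKPset κ pE a N, f • c = d

/-- `c ≡ˢ_e d` : the tuples have the same Shelah strong type over `e`. -/
def Seq (N : L.ElementarySubstructure M) {ι : Type u} (c d : ι → M) : Prop :=
  ∃ f ∈ AutfSset κ pE a N, f • c = d

end GalT

section Relativized

variable {γ : Type u} (pE : Set (L.Formula (γ ⊕ γ))) (a : γ → M)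
variable {V β : Type u} {pS : Set (L.Formula (V ⊕ β))} {bp : β → M}

/-- `Autf_KP(Σ, e)`: the set of restricted automorphisms fixing the KP strong
type of every small tuple of realizations of `Σ`. -/
noncomputable def AutfKPSset (hInv : SolInv pE a pS bp) (N : L.ElementarySubstructure M) :
    Set (GS pE a hInv) :=
  {σ | ∀ (ι : Type u), #ι < κ → ∀ c : ι → SolT pS bp,
      KPeq κ pE a N (flat c) (flat (σ • c))}

/-- `Autf_S(Σ, e)`: the set of restricted automorphisms fixing the Shelah strong
type of every small tuple of realizations of `Σ`. -/
noncomputable def AutfSSset (hInv : SolInv pE a pS bp) (N : L.ElementarySubstructure M) :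
    Set (GS pE a hInv) :=
  {σ | ∀ (ι : Type u), #ι < κ → ∀ c : ι → SolT pS bp,
      Seq κ pE a N (flat c) (flat (σ • c))}

/-- The orbit under `Aut_e(𝔠)` of the hyperimaginary given by the class of `x`
under the relation defined by `pF` is small ("`x_F` is bounded over `e`"). -/
def BoundedClass {δ : Type u} (pF : Set (L.Formula (δ ⊕ δ))) (x : δ → M) : Prop :=
  #↥(Set.range fun g : Ge pE a => g • Fclass pF x) < κ

/-- The orbit under `Aut_e(𝔠)` of the hyperimaginary given by the class of `x` is
finite ("`x_F` is algebraic over `e`"). -/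
def FiniteClass {δ : Type u} (pF : Set (L.Formula (δ ⊕ δ))) (x : δ → M) : Prop :=
  (Set.range fun g : Ge pE a => g • Fclass pF x).Finite

/-- `f` fixes the hyperimaginary given by the class of `x` (setwise). -/
def FixesClass (f : Ge pE a) {δ : Type u} (pF : Set (L.Formula (δ ⊕ δ)))
    (x : δ → M) : Prop :=
  f • Fclass pF x = Fclass pF x

variable (pS bp) in
/-- `f` fixes every hyperimaginary that is bounded over `e` and has a
representative which is a small tuple of realizations of `Σ`, i.e. `f` fixes
`bdd(e) ∩ Σ` pointwise. -/
def fixesAllBddS (f : Ge pE a) : Prop :=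
  ∀ (ι : Type u) (pF : Set (L.Formula ((ι × V) ⊕ (ι × V)))) (c : ι → SolT pS bp),
    #ι < κ → Equivalence (Frel (M := M) pF) → BoundedClass κ pE a pF (flat c) →
    FixesClass pE a f pF (flat c)

variable (pS bp) in
/-- `f` fixes every hyperimaginary that is algebraic over `e` and has a
representative which is a small tuple of realizations of `Σ`, i.e. `f` fixes
`acl(e) ∩ Σ` pointwise. -/
def fixesAllAclS (f : Ge pE a) : Prop :=
  ∀ (ι : Type u) (pF : Set (L.Formula ((ι × V) ⊕ (ι × V)))) (c : ι → SolT pS bp),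
    #ι < κ → Equivalence (Frel (M := M) pF) → FiniteClass pE a pF (flat c) →
    FixesClass pE a f pF (flat c)

end Relativized


section More

variable {γ : Type u} (pE : Set (L.Formula (γ ⊕ γ))) (a : γ → M)
variable {V β : Type u} {pS : Set (L.Formula (V ⊕ β))} {bp : β → M}

theorem mem_AutfLS_iff (hInv : SolInv pE a pS bp) {σ : GS pE a hInv} :
    σ ∈ AutfLS κ pE a hInv ↔ ∀ (ι : Type u), #ι < κ → ∀ c : ι → SolT pS bp,
      LEq κ pE a (flat c) (flat (σ • c)) := Iff.rfl

theorem toGS_mem_autfLS (hInv : SolInv pE a pS bp) {f : Ge pE a}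
    (hf : f ∈ AutfL κ pE a) : toGS pE a hInv f ∈ AutfLS κ pE a hInv :=
  (mem_AutfLS_iff κ pE a hInv).mpr
    (fun ι _ c => ⟨f, hf, (flat_toGS_smul pE a hInv f c).symm⟩)

instance AutfL_normal : (AutfL κ pE a).Normal :=
  Subgroup.normalClosure_normal

/-- The group structure of the relativized Lascar group `Gal_L(Σ, e)`. -/
noncomputable def galLGroup (hInv : SolInv pE a pS bp) : Group (GalL κ pE a hInv) :=
  @QuotientGroup.Quotient.group _ _ (AutfLS κ pE a hInv) (AutfLS_normal κ pE a hInv)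

/-- The natural projection `ξ_L : Gal_L(T, e) → Gal_L(Σ, e)`. -/
noncomputable def xiL (hInv : SolInv pE a pS bp) : GalT κ pE a → GalL κ pE a hInv :=
  haveI := AutfLS_normal κ pE a hInv
  ⇑(QuotientGroup.map (AutfL κ pE a) (AutfLS κ pE a hInv) (toGS pE a hInv)
    (fun _ hf => Subgroup.mem_comap.mpr (toGS_mem_autfLS κ pE a hInv hf)))

/-- The orbit equivalence relation `≡ᴴ` of a set `H` of restricted automorphisms,
on tuples of realizations of `Σ`. -/
def orbEq {hInv : SolInv pE a pS bp} (H : Set (GS pE a hInv)) {ι : Type u}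
    (c d : ι → SolT pS bp) : Prop :=
  ∃ h ∈ H, h • c = d

end More

/-! The restriction `Aut_e(𝔠) → Aut_e(Σ)` induces `ξ_L : Gal_L(T, e) → Gal_L(Σ, e)`, and everything
reduces to `ξ_L[Gal^c_L(T, e)] = Gal^c_L(Σ, e)`: an element of `Autf_L(Σ, e)` acts on a small
tuple like some element of `Autf_L(𝔠, e)`, so `σ ∈ H` moves `c` exactly as a KP-strong
automorphism does. That equality holds because `ξ_L` is continuous and closed. Both topologies
are quotients of type spaces, `S_N(N)` and `S_b(b)`, and both are continuous images, by
restriction, of the space of types `tp(f(N b a)/N b a)` for `f ∈ Aut_e(𝔠)`. That space is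
compact by saturation: a realization of a limit of such types has the type of `N b a` and
keeps the class of `a`, so it is again an `Aut_e`-conjugate. -/

open Topology

theorem mk_sum_lt {κ : Cardinal.{u}} (hκ : ℵ₀ < κ) {α β : Type u}
    (hα : #α < κ) (hβ : #β < κ) : #(α ⊕ β) < κ := by
  rw [Cardinal.mk_sum, Cardinal.lift_id, Cardinal.lift_id]
  exact Cardinal.add_lt_of_lt hκ.le hα hβ

theorem mk_prod_lt {κ : Cardinal.{u}} (hκ : ℵ₀ < κ) {α β : Type u}
    (hα : #α < κ) (hβ : #β < κ) : #(α × β) < κ := by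
  rw [Cardinal.mk_prod, Cardinal.lift_id, Cardinal.lift_id]
  exact Cardinal.mul_lt_of_lt hκ.le hα hβ

section CompactCover

variable {X Y Z G H : Type*} [TopologicalSpace X] [CompactSpace X]
  [TopologicalSpace Y] [TopologicalSpace Z]
  {p : X → Y} {q : X → Z} {μ : Y → G} {ν : Z → H} {ξ : G → H}

theorem continuous_coinduced_of_compact_cover [T2Space Y] (hp : Continuous p)
    (hq : Continuous q) (hp_surj : Function.Surjective p)
    (hcomm : ∀ x, ξ (μ (p x)) = ν (q x)) :
    Continuous[.coinduced μ ‹_›, .coinduced ν ‹_›] ξ := by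
  refine (@continuous_iff_isClosed _ _ (.coinduced μ _) (.coinduced ν _) ξ).mpr fun D hD => ?_
  rw [isClosed_coinduced] at hD ⊢
  have hpre : μ ⁻¹' (ξ ⁻¹' D) = p '' (q ⁻¹' (ν ⁻¹' D)) := by
    ext y
    obtain ⟨x, rfl⟩ := hp_surj y
    refine ⟨fun hx => ⟨x, by simpa [← hcomm] using hx, rfl⟩, ?_⟩
    rintro ⟨x', hx', hxx'⟩
    simpa [← hxx', hcomm] using hx'
  rw [hpre]
  exact ((hD.preimage hq).isCompact.image hp).isClosed

theorem isClosedMap_coinduced_of_compact_cover [T2Space Z] (hp : Continuous p)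
    (hq : Continuous q) (hcomm : ∀ x, ξ (μ (p x)) = ν (q x))
    (hlift : ∀ z g, ν z = ξ g → ∃ x, q x = z ∧ μ (p x) = g) :
    @IsClosedMap G H (.coinduced μ ‹_›) (.coinduced ν ‹_›) ξ := by
  intro C hC
  rw [isClosed_coinduced] at hC ⊢
  have himage : ν ⁻¹' (ξ '' C) = q '' (p ⁻¹' (μ ⁻¹' C)) := by
    ext z
    refine ⟨fun ⟨g, hg, hgz⟩ => ?_, ?_⟩
    · obtain ⟨x, hxz, hxg⟩ := hlift z g hgz.symm
      exact ⟨x, by simpa [hxg] using hg, hxz⟩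
    · rintro ⟨x, hx, rfl⟩
      exact ⟨μ (p x), hx, hcomm x⟩
  rw [himage]
  exact ((hC.preimage hp).isCompact.image hq).isClosed

theorem image_closure_eq_of_compact_cover [T2Space Y] [T2Space Z] (hp : Continuous p)
    (hq : Continuous q) (hp_surj : Function.Surjective p)
    (hcomm : ∀ x, ξ (μ (p x)) = ν (q x))
    (hlift : ∀ z g, ν z = ξ g → ∃ x, q x = z ∧ μ (p x) = g) (s : Set G) :
    ξ '' closure[.coinduced μ ‹_›] s = closure[.coinduced ν ‹_›] (ξ '' s) :=
  letI : TopologicalSpace G := .coinduced μ ‹_›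
  letI : TopologicalSpace H := .coinduced ν ‹_›
  ((isClosedMap_coinduced_of_compact_cover hp hq hcomm hlift).closure_image_eq_of_continuous
    (continuous_coinduced_of_compact_cover hp hq hp_surj hcomm) s).symm

end CompactCover

section TypeSpaces

attribute [local instance] typeSetTop

section Indicator

variable {F : Type u}

noncomputable def typeIndicator (X : Set (Set F)) : X → F → Bool :=
  fun p φ => (p : Set F).boolIndicator φ

theorem isEmbedding_typeIndicator (X : Set (Set F)) : IsEmbedding (typeIndicator X) := by
  refine ⟨⟨rfl⟩, fun p p' h => Subtype.ext (Set.ext fun φ => ?_)⟩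
  rw [Set.mem_iff_boolIndicator, Set.mem_iff_boolIndicator]
  exact Eq.congr_left (congrFun h φ)

instance (X : Set (Set F)) : T2Space X := (isEmbedding_typeIndicator X).t2Space

theorem compactSpace_of_finite_approx {X : Set (Set F)}
    (hX : ∀ q : Set F, (∀ s : Finset F, ∃ p ∈ X, ∀ φ ∈ s, φ ∈ p ↔ φ ∈ q) → q ∈ X) :
    CompactSpace X := by
  refine ⟨(isEmbedding_typeIndicator X).isCompact_iff.mpr ?_⟩
  rw [Set.image_univ]
  refine (isClosed_of_closure_subset fun χ hχ => ?_).isCompact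
  have hq : {φ | χ φ = true} ∈ X := by
    refine hX _ fun s => ?_
    have hopen : IsOpen ((s : Set F).pi fun φ => {χ φ}) :=
      isOpen_set_pi s.finite_toSet fun _ _ => isOpen_discrete _
    obtain ⟨_, hagree, p, rfl⟩ := mem_closure_iff.mp hχ _ hopen fun _ _ => rfl
    refine ⟨p, p.2, fun φ hφ => ?_⟩
    rw [Set.mem_iff_boolIndicator]
    exact Eq.congr_left (hagree φ hφ)
  refine ⟨⟨_, hq⟩, funext fun φ => ?_⟩
  cases h : χ φ <;> simp [typeIndicator, Set.boolIndicator, h]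

end Indicator

section OrbitTypes

variable {γ : Type u} (pE : Set (L.Formula (γ ⊕ γ))) (a : γ → M)

def orbitTypes {ι : Type u} (prm : ι → M) : Set (Set (L.Formula (ι ⊕ ι))) :=
  Set.range fun g : Ge pE a => tpOver prm (g • prm)

theorem smul_Fclass (f : M ≃[L] M) {δ : Type u} (pF : Set (L.Formula (δ ⊕ δ))) (x : δ → M) :
    f • Fclass pF x = Fclass pF (f • x) := by
  ext y
  rw [Set.mem_smul_set_iff_inv_smul_mem]
  have hcomp : f ∘ Sum.elim x (f⁻¹ • y) = Sum.elim (f • x) y := by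
    ext (t | t)
    · rfl
    · exact f.apply_symm_apply (y t)
  refine forall₂_congr fun φ _ => ?_
  rw [← Language.StrongHomClass.realize_formula f, hcomp]

variable {κ pE a}

theorem frel_smul (hE : Equivalence (Frel (M := M) pE)) (g : Ge pE a) :
    Frel pE a ((g : M ≃[L] M) • a) := by
  have hstab : (g : M ≃[L] M) • Fclass pE a = Fclass pE a := g.2
  have hga : (g : M ≃[L] M) • a ∈ (g : M ≃[L] M) • Fclass pE a := Set.smul_mem_smul_set (hE.refl a)
  rwa [hstab] at hga

theorem mem_AutE_of_frel (hE : Equivalence (Frel (M := M) pE)) {f : M ≃[L] M}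
    (hf : Frel pE a (f • a)) : f ∈ AutE pE a := by
  refine MulAction.mem_stabilizer_iff.mpr ?_
  rw [smul_Fclass]
  ext y
  exact ⟨hE.trans hf, hE.trans (hE.symm hf)⟩

theorem realize_of_forall_mem_tpOver {ι : Type u} {prm v : ι → M}
    (hv : ∀ φ : L.Formula (ι ⊕ ι), (∀ g : Ge pE a, φ ∈ tpOver prm (g • prm)) → φ ∈ tpOver prm v)
    {ψ : L.Formula ι} (hψ : ψ.Realize prm) : ψ.Realize v := by
  have := hv (ψ.relabel Sum.inl) fun g => by
    simp only [tpOver, Set.mem_ofPred_eq, Language.Formula.realize_relabel, Sum.elim_comp_inl]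
    exact (Language.StrongHomClass.realize_formula (g : M ≃[L] M) ψ).mpr hψ
  simpa [tpOver, Language.Formula.realize_relabel] using this

/-- `hjγ` says that `prm` lists the representative `a` of `e`; this is what puts the conjugating
automorphism in `Aut_e(𝔠)`. -/
theorem exists_smul_eq_of_forall_mem_tpOver (hM : IsMonster κ L M)
    (hE : Equivalence (Frel (M := M) pE)) {ι : Type u} {prm : ι → M} (hι : #ι < κ)
    {jγ : γ → ι} (hjγ : prm ∘ jγ = a) {v : ι → M}
    (hv : ∀ φ : L.Formula (ι ⊕ ι), (∀ g : Ge pE a, φ ∈ tpOver prm (g • prm)) → φ ∈ tpOver prm v) :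
    ∃ f : Ge pE a, f • prm = v := by
  have hsame : SameTp prm v := fun ψ =>
    ⟨realize_of_forall_mem_tpOver hv, fun h => by_contra fun hn =>
      (realize_of_forall_mem_tpOver hv (ψ := ψ.not) hn) h⟩
  obtain ⟨f, hf⟩ := hM.2.1 ι prm v hι hsame
  have hfv : (f : M ≃[L] M) • prm = v := funext hf
  have hsmul : ∀ g : M ≃[L] M, (g • prm) ∘ jγ = g • a := fun g => by rw [← hjγ]; rfl
  have hfa : Frel pE (f • a) a := fun φ hφ => by
    have hrel : ∀ w : ι → M,
        φ.relabel (Sum.map jγ jγ) ∈ tpOver prm w ↔ φ.Realize (Sum.elim (w ∘ jγ) a) := fun w => by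
      rw [← hjγ, ← Sum.elim_comp_map]
      exact Language.Formula.realize_relabel
    have := (hrel v).mp (hv _ fun g => (hrel _).mpr ?_)
    · rwa [← hfv, hsmul] at this
    · rw [show g • prm = (g : M ≃[L] M) • prm from rfl, hsmul]
      exact hE.symm (frel_smul hE g) φ hφ
  exact ⟨⟨f, mem_AutE_of_frel hE (hE.symm hfa)⟩, hfv⟩

theorem mem_orbitTypes_of_finite_approx (hM : IsMonster κ L M)
    (hE : Equivalence (Frel (M := M) pE)) {ι : Type u} {prm : ι → M} (hι : #ι < κ)
    {jγ : γ → ι} (hjγ : prm ∘ jγ = a) {q : Set (L.Formula (ι ⊕ ι))}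
    (hq : ∀ s : Finset (L.Formula (ι ⊕ ι)), ∃ p ∈ orbitTypes pE a prm, ∀ φ ∈ s, φ ∈ p ↔ φ ∈ q) :
    q ∈ orbitTypes pE a prm := by
  classical
  replace hq : ∀ s : Finset (L.Formula (ι ⊕ ι)), ∃ g : Ge pE a,
      ∀ φ ∈ s, φ ∈ tpOver prm (g • prm) ↔ φ ∈ q := fun s => by
    obtain ⟨_, ⟨g, rfl⟩, hg⟩ := hq s
    exact ⟨g, hg⟩
  obtain ⟨v, hv⟩ : ∃ v, v ∈ SolSet q prm := hM.2.2 ι ι prm q hι hι fun s hs => by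
    obtain ⟨g, hg⟩ := hq s
    exact ⟨g • prm, fun φ hφ => (hg φ hφ).mpr (hs hφ)⟩
  have hneg : ∀ φ, φ ∉ q → φ.not ∈ q := fun φ hφ => by
    obtain ⟨g, hg⟩ := hq {φ, φ.not}
    refine (hg φ.not (by simp)).mp (Language.Formula.realize_not.mpr fun h => hφ ?_)
    exact (hg φ (by simp)).mp h
  have htp : tpOver prm v = q := Set.Subset.antisymm
    (fun φ hφ => by_contra fun hq' => Language.Formula.realize_not.mp (hv _ (hneg φ hq')) hφ) hv
  obtain ⟨f, rfl⟩ := exists_smul_eq_of_forall_mem_tpOver hM hE hι hjγ (v := v) fun φ hφ => by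
    obtain ⟨g, hg⟩ := hq {φ}
    exact hv φ ((hg φ (Finset.mem_singleton_self φ)).mp (hφ g))
  exact ⟨f, htp⟩

theorem compactSpace_orbitTypes (hM : IsMonster κ L M) (hE : Equivalence (Frel (M := M) pE))
    {ι : Type u} {prm : ι → M} (hι : #ι < κ) {jγ : γ → ι} (hjγ : prm ∘ jγ = a) :
    CompactSpace (orbitTypes pE a prm) :=
  compactSpace_of_finite_approx fun _ => mem_orbitTypes_of_finite_approx hM hE hι hjγ

theorem inv_mul_mem_of_tpOver_eq (hM : IsMonster κ L M) {ι : Type u} {prm : ι → M}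
    (hι : #ι < κ) (hdcl : eInDclTuple pE a prm) {K : Subgroup (Ge pE a)} [K.Normal]
    (hK : ∀ h : Ge pE a, h • prm = prm → h ∈ K) {f g : Ge pE a}
    (hfg : tpOver (L := L) prm (f • prm) = tpOver prm (g • prm)) : f⁻¹ * g ∈ K := by
  have hsame : SameTp (Sum.elim (f • prm) prm) (Sum.elim (g • prm) prm) := fun φ =>
    Set.ext_iff.mp hfg φ
  obtain ⟨h₀, hh₀⟩ := hM.2.1 _ _ _ (mk_sum_lt hM.1 hι hι) hsame
  set H₀ : Ge pE a := ⟨h₀, hdcl h₀ fun i => hh₀ (Sum.inr i)⟩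
  have hH₀ : H₀ ∈ K := hK H₀ (funext fun i => hh₀ (Sum.inr i))
  have hH₀f : H₀ • f • prm = g • prm := funext fun i => hh₀ (Sum.inl i)
  have hz : g⁻¹ * H₀ * f ∈ K := hK _ (by rw [mul_smul, mul_smul, hH₀f, inv_smul_smul])
  have hfg : f⁻¹ * g = (f⁻¹ * H₀ * f) * (g⁻¹ * H₀ * f)⁻¹ := by group
  rw [hfg]
  exact mul_mem (Subgroup.Normal.conj_mem' ‹_› H₀ hH₀ f) (inv_mem hz)

end OrbitTypes

section Restriction

variable {γ : Type u} (pE : Set (L.Formula (γ ⊕ γ))) (a : γ → M)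
variable {ι₁ ι₂ : Type u} {prm₁ : ι₁ → M} {prm₂ : ι₂ → M} (j : ι₂ → ι₁) (hj : prm₁ ∘ j = prm₂)

theorem preimage_relabel_tpOver (prm w : ι₁ → M) :
    (fun φ : L.Formula (ι₂ ⊕ ι₂) => φ.relabel (Sum.map j j)) ⁻¹' tpOver prm w =
      tpOver (prm ∘ j) (w ∘ j) := by
  ext φ
  rw [Set.mem_preimage, tpOver, tpOver, Set.mem_ofPred_eq, Set.mem_ofPred_eq,
    Language.Formula.realize_relabel, Sum.elim_comp_map]

def restrictTypes : orbitTypes pE a prm₁ → orbitTypes pE a prm₂ :=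
  fun P => ⟨(fun φ : L.Formula (ι₂ ⊕ ι₂) => φ.relabel (Sum.map j j)) ⁻¹' P, by
    obtain ⟨g, hg⟩ := P.2
    subst hj
    exact ⟨g, by rw [← hg, preimage_relabel_tpOver]; rfl⟩⟩

variable {pE a j hj}

theorem coe_restrictTypes {P : orbitTypes pE a prm₁} {g : Ge pE a}
    (hP : (P : Set (L.Formula (ι₁ ⊕ ι₁))) = tpOver prm₁ (g • prm₁)) :
    (restrictTypes pE a j hj P : Set (L.Formula (ι₂ ⊕ ι₂))) = tpOver prm₂ (g • prm₂) := by
  subst hj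
  exact (congrArg _ hP).trans (preimage_relabel_tpOver j prm₁ _)

theorem restrictTypes_surjective : Function.Surjective (restrictTypes pE a j hj) := by
  rintro ⟨_, g, rfl⟩
  exact ⟨⟨_, g, rfl⟩, Subtype.ext (coe_restrictTypes rfl)⟩

theorem continuous_restrictTypes : Continuous (restrictTypes pE a j hj) :=
  continuous_induced_rng.mpr (continuous_pi fun φ =>
    (continuous_apply (φ.relabel (Sum.map j j))).comp (isEmbedding_typeIndicator _).continuous)

end Restriction

section GaloisGroups

variable {κ}
variable {γ : Type u} {pE : Set (L.Formula (γ ⊕ γ))} {a : γ → M}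
variable {V β : Type u} {pS : Set (L.Formula (V ⊕ β))} {bp : β → M}

theorem flat_injective {ι : Type u} : Function.Injective (flat : (ι → SolT pS bp) → ι × V → M) :=
  fun _ _ h => funext fun i => Subtype.ext (funext fun v => congrFun h (i, v))

theorem projT_eq_of_tpOver_eq (hM : IsMonster κ L M) {N : L.ElementarySubstructure M}
    (hN : #N < κ) (hNdcl : ∀ g : M ≃[L] M, (∀ x ∈ N, g x = x) → g ∈ AutE pE a)
    {f g : Ge pE a}
    (hfg : tpOver (L := L) (Subtype.val : N → M) (f • Subtype.val) =
      tpOver Subtype.val (g • Subtype.val)) :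
    projT κ pE a f = projT κ pE a g :=
  QuotientGroup.eq.mpr <| inv_mul_mem_of_tpOver_eq hM hN
    (fun h hh => hNdcl h fun x hx => hh ⟨x, hx⟩)
    (fun _ hh => Subgroup.subset_normalClosure (s := modelFixers κ pE a)
      ⟨N, hN, hNdcl, fun x hx => congrFun hh ⟨x, hx⟩⟩)
    hfg

theorem projS_eq_of_tpOver_eq (hM : IsMonster κ L M) (hV : #V < κ) (hInv : SolInv pE a pS bp)
    {ιb : Type u} {b : ιb → SolT pS bp} (hb : IsLascarTuple κ pE a hInv b)
    (hbdcl : eInDclTuple pE a (flat b)) {f g : Ge pE a}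
    (hfg : tpOver (L := L) (flat b) (f • flat b) = tpOver (flat b) (g • flat b)) :
    projS κ pE a hInv f = projS κ pE a hInv g := by
  have := AutfLS_normal κ pE a hInv
  have hK := inv_mul_mem_of_tpOver_eq hM (mk_prod_lt hM.1 hb.1 hV) hbdcl
    (K := (AutfLS κ pE a hInv).comap (toGS pE a hInv)) (fun h hh => (hb.2 _).mpr ?_) hfg
  · rw [Subgroup.mem_comap, map_mul, map_inv] at hK
    exact QuotientGroup.eq.mpr hK
  · rw [flat_toGS_smul, hh]
    exact LEq.refl κ pE a _

theorem nuT_eq_projT (hM : IsMonster κ L M) {N : L.ElementarySubstructure M} (hN : #N < κ)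
    (hNdcl : ∀ g : M ≃[L] M, (∀ x ∈ N, g x = x) → g ∈ AutE pE a) {p : SMod pE a N}
    {f : Ge pE a} (hp : (p : Set (L.Formula (N ⊕ N))) = tpOver Subtype.val (f • Subtype.val)) :
    nuT κ pE a N p = projT κ pE a f :=
  projT_eq_of_tpOver_eq hM hN hNdcl ((Set.mem_range.mp p.2).choose_spec.trans hp)

theorem nub_eq_projS (hM : IsMonster κ L M) (hV : #V < κ) (hInv : SolInv pE a pS bp)
    {ιb : Type u} {b : ιb → SolT pS bp} (hb : IsLascarTuple κ pE a hInv b)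
    (hbdcl : eInDclTuple pE a (flat b)) {p : Sb pE a b} {f : Ge pE a}
    (hp : (p : Set (L.Formula ((ιb × V) ⊕ (ιb × V)))) = tpOver (flat b) (f • flat b)) :
    nub κ pE a hInv b p = projS κ pE a hInv f :=
  projS_eq_of_tpOver_eq hM hV hInv hb hbdcl ((Set.mem_range.mp p.2).choose_spec.trans hp)

theorem exists_mem_AutfL_mul_smul_flat_eq {hInv : SolInv pE a pS bp} {h : Ge pE a}
    {σ : GS pE a hInv} (hσ : projS κ pE a hInv h = projb κ pE a hInv σ) {ι : Type u}
    (hι : #ι < κ) (c : ι → SolT pS bp) :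
    ∃ u ∈ AutfL κ pE a, (h * u) • flat c = flat (σ • c) := by
  obtain ⟨u, hu, huc⟩ := (QuotientGroup.eq.mp hσ : (toGS pE a hInv h)⁻¹ * σ ∈ _) ι hι c
  refine ⟨u, hu, ?_⟩
  rw [mul_smul, huc, ← flat_toGS_smul pE a hInv h, ← mul_smul, mul_inv_cancel_left]

variable (a) in
def jointParams (N : L.ElementarySubstructure M) {ιb : Type u} (b : ιb → SolT pS bp) :
    N ⊕ ((ιb × V) ⊕ γ) → M :=
  Sum.elim Subtype.val (Sum.elim (flat b) a)

variable (N : L.ElementarySubstructure M) {ιb : Type u} (b : ιb → SolT pS bp)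

abbrev restrictToModel : orbitTypes pE a (jointParams a N b) → SMod pE a N :=
  restrictTypes pE a Sum.inl rfl

abbrev restrictToTuple : orbitTypes pE a (jointParams a N b) → Sb pE a b :=
  restrictTypes pE a (Sum.inr ∘ Sum.inl) rfl

variable {N b}

theorem xiL_nuT_restrictToModel (hM : IsMonster κ L M) (hV : #V < κ)
    (hInv : SolInv pE a pS bp) (hb : IsLascarTuple κ pE a hInv b)
    (hbdcl : eInDclTuple pE a (flat b)) (hN : #N < κ)
    (hNdcl : ∀ g : M ≃[L] M, (∀ x ∈ N, g x = x) → g ∈ AutE pE a)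
    (P : orbitTypes pE a (jointParams a N b)) :
    xiL κ pE a hInv (nuT κ pE a N (restrictToModel N b P)) =
      nub κ pE a hInv b (restrictToTuple N b P) := by
  obtain ⟨f, hf⟩ := P.2
  calc xiL κ pE a hInv (nuT κ pE a N (restrictToModel N b P))
      = xiL κ pE a hInv (projT κ pE a f) :=
        congrArg _ (nuT_eq_projT hM hN hNdcl (coe_restrictTypes hf.symm))
    _ = nub κ pE a hInv b (restrictToTuple N b P) :=
        (nub_eq_projS hM hV hInv hb hbdcl (coe_restrictTypes hf.symm)).symm

theorem exists_restrictToTuple_eq (hM : IsMonster κ L M) (hV : #V < κ)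
    (hInv : SolInv pE a pS bp) (hb : IsLascarTuple κ pE a hInv b)
    (hbdcl : eInDclTuple pE a (flat b)) (hN : #N < κ)
    (hNdcl : ∀ g : M ≃[L] M, (∀ x ∈ N, g x = x) → g ∈ AutE pE a)
    (z : Sb pE a b) (y : GalT κ pE a) (hzy : nub κ pE a hInv b z = xiL κ pE a hInv y) :
    ∃ P, restrictToTuple N b P = z ∧ nuT κ pE a N (restrictToModel N b P) = y := by
  obtain ⟨f, hf⟩ := z.2
  obtain ⟨h, rfl⟩ := QuotientGroup.mk_surjective y
  have hσ : projS κ pE a hInv h = projb κ pE a hInv (toGS pE a hInv f) :=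
    hzy.symm.trans (nub_eq_projS hM hV hInv hb hbdcl hf.symm)
  obtain ⟨u, hu, hub⟩ := exists_mem_AutfL_mul_smul_flat_eq hσ hb.1 b
  refine ⟨⟨_, h * u, rfl⟩, Subtype.ext ?_, ?_⟩
  · refine (coe_restrictTypes rfl).trans ?_
    rw [hub, flat_toGS_smul]
    exact hf
  · exact (nuT_eq_projT hM hN hNdcl (coe_restrictTypes rfl)).trans
      (QuotientGroup.mk_mul_of_mem h hu)

theorem image_xiL_closure (hM : IsMonster κ L M) (hγ : #γ < κ)
    (hE : Equivalence (Frel (M := M) pE)) (hV : #V < κ) (hInv : SolInv pE a pS bp)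
    (hb : IsLascarTuple κ pE a hInv b) (hbdcl : eInDclTuple pE a (flat b)) (hN : #N < κ)
    (hNdcl : ∀ g : M ≃[L] M, (∀ x ∈ N, g x = x) → g ∈ AutE pE a) (s : Set (GalT κ pE a)) :
    xiL κ pE a hInv '' closure[galTopT κ pE a N] s =
      closure[galTopb κ pE a hInv b] (xiL κ pE a hInv '' s) := by
  have := compactSpace_orbitTypes (a := a) (prm := jointParams a N b)
    (jγ := Sum.inr ∘ Sum.inr) hM hE
    (mk_sum_lt hM.1 hN (mk_sum_lt hM.1 (mk_prod_lt hM.1 hb.1 hV) hγ)) rfl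
  exact image_closure_eq_of_compact_cover continuous_restrictTypes continuous_restrictTypes
    restrictTypes_surjective (xiL_nuT_restrictToModel hM hV hInv hb hbdcl hN hNdcl)
    (exists_restrictToTuple_eq hM hV hInv hb hbdcl hN hNdcl) s

end GaloisGroups

end TypeSpaces

section Statements

variable {γ : Type u} (pE : Set (L.Formula (γ ⊕ γ))) (a : γ → M)
variable {V β : Type u} {pS : Set (L.Formula (V ⊕ β))} {bp : β → M}

theorem orbEq_closure_iff_KPeq (hM : IsMonster κ L M) (hγ : #γ < κ)
    (hE : Equivalence (Frel (M := M) pE)) (hV : #V < κ)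
    (hInv : SolInv pE a pS bp)
    {ιb : Type u} (b : ιb → SolT pS bp)
    (hb : IsLascarTuple κ pE a hInv b) (hbdcl : eInDclTuple pE a (flat b))
    (N : L.ElementarySubstructure M) (hN : #N < κ)
    (hNdcl : ∀ g : M ≃[L] M, (∀ x ∈ N, g x = x) → g ∈ AutE pE a)
    {ι : Type u} (hι : #ι < κ) (c d : ι → SolT pS bp) :
    orbEq (hInv := hInv) pE a
        (projb κ pE a hInv ⁻¹'
          (@closure _ (galTopb κ pE a hInv b) {projb κ pE a hInv 1})) c d ↔
      KPeq κ pE a N (flat c) (flat d) := by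
  have hone : xiL κ pE a hInv (projT κ pE a 1) = projb κ pE a hInv 1 :=
    congrArg (projb κ pE a hInv) (map_one _)
  have hcl := image_xiL_closure hM hγ hE hV hInv hb hbdcl hN hNdcl {projT κ pE a 1}
  rw [Set.image_singleton, hone] at hcl
  rw [← hcl]
  constructor
  · rintro ⟨σ, ⟨y, hy, hyσ⟩, rfl⟩
    obtain ⟨h, rfl⟩ := QuotientGroup.mk_surjective y
    obtain ⟨u, hu, huc⟩ := exists_mem_AutfL_mul_smul_flat_eq hyσ hι c
    have hhu : projT κ pE a (h * u) = projT κ pE a h := QuotientGroup.mk_mul_of_mem h hu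
    refine ⟨h * u, ?_, huc⟩
    rw [AutfKPset, Set.mem_preimage, hhu]
    exact hy
  · rintro ⟨f, hf, hfc⟩
    refine ⟨toGS pE a hInv f, ⟨projT κ pE a f, hf, rfl⟩, flat_injective ?_⟩
    rw [flat_toGS_smul, hfc]

end Statements

end RelLascar
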